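/- arXiv:math/0105249 — 2 statements merged into one kernel-verified Lean document; each statement's English description precedes it below -/
import Mathlib

section
/- Let f : [a,b] → ℝ be C³ with Df(x) ≠ 0 for all x ∈ [a,b], and suppose f has negative Schwarzian derivative on [a,b], i.e. Sf(x) = D³f(x)/Df(x) − (3/2)(D²f(x)/Df(x))² < 0 for all x. Then for every x ∈ [a,b], |Df(x)| ≥ min(|Df(a)|, |Df(b)|). -/
open Set Filter

lemma aux_min (a b : ℝ) (hab : a ≤ b) (f' f'' f''' : ℝ → ℝ)
    (h2 : ∀ x ∈ Icc a b, HasDerivAt f' (f'' x) x)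
    (h3 : ∀ x ∈ Icc a b, HasDerivAt f'' (f''' x) x)
    (hpos : ∀ x ∈ Icc a b, 0 < f' x)
    (hS : ∀ x ∈ Icc a b, f''' x / f' x - (3/2) * (f'' x / f' x)^2 < 0) :
    ∀ x ∈ Icc a b, min (f' a) (f' b) ≤ f' x := by
  have hcont : ContinuousOn f' (Icc a b) := fun x hx =>
    (h2 x hx).continuousAt.continuousWithinAt
  obtain ⟨c, hc, hmin⟩ := isCompact_Icc.exists_isMinOn (nonempty_Icc.2 hab) hcont
  have key : ∀ x ∈ Icc a b, f' c ≤ f' x := fun x hx => hmin hx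
  rcases eq_or_lt_of_le hc.1 with h | hac
  · intro x hx
    calc min (f' a) (f' b) ≤ f' a := min_le_left _ _
    _ = f' c := by rw [h]
    _ ≤ f' x := key x hx
  rcases eq_or_lt_of_le hc.2 with h | hcb
  · intro x hx
    calc min (f' a) (f' b) ≤ f' b := min_le_right _ _
    _ = f' c := by rw [← h]
    _ ≤ f' x := key x hx
  exfalso
  have hloc : IsLocalMin f' c := hmin.isLocalMin (Icc_mem_nhds hac hcb)
  have hf''c : f'' c = 0 := hloc.hasDerivAt_eq_zero (h2 c hc)
  have hS' := hS c hc
  rw [hf''c] at hS'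
  simp only [zero_div, ne_eq, OfNat.ofNat_ne_zero, not_false_eq_true, zero_pow, mul_zero,
    sub_zero] at hS'
  have hfc : 0 < f' c := hpos c hc
  have hneg : f''' c < 0 := by
    rcases div_neg_iff.mp hS' with ⟨h1, h2⟩ | ⟨h1, h2⟩ <;> linarith
  have hslope := hasDerivAt_iff_tendsto_slope.mp (h3 c hc)
  have hev : ∀ᶠ x in nhdsWithin c (Iio c), slope f'' c x < 0 :=
    (hslope.mono_left (nhdsWithin_mono c (fun x hx => ne_of_lt hx))).eventually
      (Iio_mem_nhds hneg)
  obtain ⟨l, hl, hsub⟩ := mem_nhdsLT_iff_exists_Ioo_subset.mp hev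
  set x0 := max a l with hx0
  have hx0c : x0 < c := max_lt hac hl
  have hx0a : a ≤ x0 := le_max_left _ _
  have hposf'' : ∀ x ∈ Ioo x0 c, 0 < f'' x := by
    intro x hx
    have hxl : x ∈ Ioo l c := ⟨lt_of_le_of_lt (le_max_right a l) hx.1, hx.2⟩
    have hs : slope f'' c x < 0 := hsub hxl
    rw [slope_def_field] at hs
    rw [hf''c, sub_zero] at hs
    have hxc : x - c < 0 := sub_neg.mpr hx.2
    rcases div_neg_iff.mp hs with ⟨h1, h2⟩ | ⟨h1, h2⟩ <;> linarith
  have hsubset : Icc x0 c ⊆ Icc a b := Icc_subset_Icc hx0a hc.2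
  have hmono : StrictMonoOn f' (Icc x0 c) := by
    apply strictMonoOn_of_deriv_pos (convex_Icc _ _) (hcont.mono hsubset)
    intro x hx
    rw [interior_Icc] at hx
    have hxab : x ∈ Icc a b := hsubset ⟨le_of_lt hx.1, le_of_lt hx.2⟩
    rw [(h2 x hxab).deriv]
    exact hposf'' x hx
  have hy : (x0 + c) / 2 ∈ Icc x0 c := ⟨by linarith [hx0c.le], by linarith [hx0c.le]⟩
  have hlt : f' ((x0 + c) / 2) < f' c :=
    hmono hy (right_mem_Icc.2 hx0c.le) (by linarith)
  have := key _ (hsubset hy)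
  linarith

theorem stmt_1 (a b : ℝ) (hab : a ≤ b) (f f' f'' f''' : ℝ → ℝ)
    (h1 : ∀ x ∈ Set.Icc a b, HasDerivAt f (f' x) x)
    (h2 : ∀ x ∈ Set.Icc a b, HasDerivAt f' (f'' x) x)
    (h3 : ∀ x ∈ Set.Icc a b, HasDerivAt f'' (f''' x) x)
    (hne : ∀ x ∈ Set.Icc a b, f' x ≠ 0)
    (hS : ∀ x ∈ Set.Icc a b, f''' x / f' x - (3/2) * (f'' x / f' x)^2 < 0) :
    ∀ x ∈ Set.Icc a b, min |f' a| |f' b| ≤ |f' x| := by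
  have hcont : ContinuousOn f' (Icc a b) := fun x hx =>
    (h2 x hx).continuousAt.continuousWithinAt
  have hsign : (∀ x ∈ Icc a b, 0 < f' x) ∨ (∀ x ∈ Icc a b, f' x < 0) := by
    by_contra h
    push_neg at h
    obtain ⟨⟨u, hu, hu'⟩, ⟨v, hv, hv'⟩⟩ := h
    have hsub : uIcc u v ⊆ Icc a b := uIcc_subset_Icc hu hv
    have h0 : (0 : ℝ) ∈ uIcc (f' u) (f' v) := by
      rw [mem_uIcc]; left; exact ⟨hu', hv'⟩
    obtain ⟨z, hz, hz0⟩ := intermediate_value_uIcc (hcont.mono hsub) h0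
    exact hne z (hsub hz) hz0
  rcases hsign with hpos | hneg
  · intro x hx
    have := aux_min a b hab f' f'' f''' h2 h3 hpos hS x hx
    rw [abs_of_pos (hpos a ⟨le_refl a, hab⟩), abs_of_pos (hpos b ⟨hab, le_refl b⟩),
      abs_of_pos (hpos x hx)]
    exact this
  · intro x hx
    have hS' : ∀ y ∈ Icc a b,
        (fun t => -f''' t) y / (fun t => -f' t) y
          - (3/2) * ((fun t => -f'' t) y / (fun t => -f' t) y)^2 < 0 := by
      intro y hy
      simpa [neg_div_neg_eq] using hS y hy
    have := aux_min a b hab (fun t => -f' t) (fun t => -f'' t) (fun t => -f''' t)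
      (fun y hy => (h2 y hy).neg) (fun y hy => (h3 y hy).neg)
      (fun y hy => neg_pos.mpr (hneg y hy)) hS' x hx
    rw [abs_of_neg (hneg a ⟨le_refl a, hab⟩), abs_of_neg (hneg b ⟨hab, le_refl b⟩),
      abs_of_neg (hneg x hx)]
    exact this
end

section
/- Let Ω ⊆ (0, γ̄) be measurable, let (γ_l) be a strictly decreasing positive sequence with γ_l → 0 and l²γ_l → c > 0, and set Ω_l = Ω ∩ [γ_l, γ_{l−1}]. Suppose m(Ω_l)/(γ_{l−1} − γ_l) → Δ as l → ∞. Then lim_{γ→0⁺} m(Ω ∩ (0, γ))/γ = Δ. -/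
open MeasureTheory Filter Set

theorem stmt_15 (γbar : ℝ) (Ω : Set ℝ) (hΩ : MeasurableSet Ω)
    (hΩsub : Ω ⊆ Set.Ioo 0 γbar)
    (γ : ℕ → ℝ) (c Δ : ℝ) (hc : 0 < c)
    (hpos : ∀ l, 0 < γ l) (hanti : StrictAnti γ)
    (h0 : Filter.Tendsto γ Filter.atTop (nhds 0))
    (hlim : Filter.Tendsto (fun l : ℕ => (l:ℝ)^2 * γ l) Filter.atTop (nhds c))
    (hdens : Filter.Tendsto
      (fun l : ℕ => (MeasureTheory.volume (Ω ∩ Set.Icc (γ (l+1)) (γ l))).toReal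
        / (γ l - γ (l+1))) Filter.atTop (nhds Δ)) :
    Filter.Tendsto (fun t : ℝ => (MeasureTheory.volume (Ω ∩ Set.Ioo 0 t)).toReal / t)
      (nhdsWithin 0 (Set.Ioi 0)) (nhds Δ) := by
  classical
  have hγlt : ∀ l, γ (l+1) < γ l := fun l => hanti (Nat.lt_succ_self l)
  set a : ℕ → ℝ := fun l => (MeasureTheory.volume (Ω ∩ Set.Icc (γ (l+1)) (γ l))).toReal
    with hadef
  set F : ℝ → ℝ := fun t => (MeasureTheory.volume (Ω ∩ Set.Ioo 0 t)).toReal with hFdef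
  have hfin : ∀ t : ℝ, volume (Ω ∩ Set.Ioo 0 t) ≠ ⊤ := by
    intro t
    refine ne_top_of_le_ne_top ?_ (measure_mono inter_subset_right)
    rw [Real.volume_Ioo]; exact ENNReal.ofReal_ne_top
  have hFnn : ∀ t, 0 ≤ F t := fun t => ENNReal.toReal_nonneg
  have hFmono : ∀ s t : ℝ, s ≤ t → F s ≤ F t := by
    intro s t hst
    exact ENNReal.toReal_mono (hfin t)
      (measure_mono (inter_subset_inter_right _ (Ioo_subset_Ioo le_rfl hst)))
  have hFle : ∀ t : ℝ, 0 ≤ t → F t ≤ t := by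
    intro t ht
    have h1 := ENNReal.toReal_mono (a := volume (Ω ∩ Set.Ioo 0 t))
      (b := volume (Set.Ioo 0 t))
      (by rw [Real.volume_Ioo]; exact ENNReal.ofReal_ne_top)
      (measure_mono inter_subset_right)
    simpa [Real.volume_Ioo, ENNReal.toReal_ofReal ht] using h1
  have hstep : ∀ l, F (γ l) = F (γ (l+1)) + a l := by
    intro l
    have hIcoIcc : volume (Ω ∩ Set.Ico (γ (l+1)) (γ l))
        = volume (Ω ∩ Set.Icc (γ (l+1)) (γ l)) := by
      refine le_antisymm (measure_mono (inter_subset_inter_right _ Ico_subset_Icc_self)) ?_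
      have hsub : Ω ∩ Set.Icc (γ (l+1)) (γ l) ⊆ (Ω ∩ Set.Ico (γ (l+1)) (γ l)) ∪ {γ l} := by
        rintro x ⟨hx, hx1, hx2⟩
        rcases lt_or_eq_of_le hx2 with h | h
        · exact Or.inl ⟨hx, hx1, h⟩
        · exact Or.inr h
      calc volume (Ω ∩ Set.Icc (γ (l+1)) (γ l))
          ≤ volume ((Ω ∩ Set.Ico (γ (l+1)) (γ l)) ∪ {γ l}) := measure_mono hsub
        _ ≤ volume (Ω ∩ Set.Ico (γ (l+1)) (γ l)) + volume {γ l} := measure_union_le _ _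
        _ = volume (Ω ∩ Set.Ico (γ (l+1)) (γ l)) := by simp
    have hsplit : Ω ∩ Set.Ioo 0 (γ l)
        = (Ω ∩ Set.Ioo 0 (γ (l+1))) ∪ (Ω ∩ Set.Ico (γ (l+1)) (γ l)) := by
      rw [← inter_union_distrib_left, Set.Ioo_union_Ico_eq_Ioo (hpos (l+1)) (hγlt l).le]
    have hdisj : Disjoint (Ω ∩ Set.Ioo 0 (γ (l+1))) (Ω ∩ Set.Ico (γ (l+1)) (γ l)) := by
      refine Set.disjoint_left.mpr ?_
      rintro x ⟨_, _, h2⟩ ⟨_, h3, _⟩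
      exact absurd h3 (not_le.mpr h2)
    have hu := measure_union (μ := volume) hdisj (hΩ.inter measurableSet_Ico)
    have hfinIcc : volume (Ω ∩ Set.Icc (γ (l+1)) (γ l)) ≠ ⊤ := by
      refine ne_top_of_le_ne_top ?_ (measure_mono inter_subset_right)
      rw [Real.volume_Icc]; exact ENNReal.ofReal_ne_top
    have : volume (Ω ∩ Set.Ioo 0 (γ l))
        = volume (Ω ∩ Set.Ioo 0 (γ (l+1))) + volume (Ω ∩ Set.Icc (γ (l+1)) (γ l)) := by
      rw [hsplit, hu, hIcoIcc]
    simp only [hFdef, hadef]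
    rw [this, ENNReal.toReal_add (hfin _) hfinIcc]
  have hFγ0 : Tendsto (fun m => F (γ m)) atTop (nhds 0) :=
    squeeze_zero (fun m => hFnn _) (fun m => hFle _ (hpos m).le) h0
  -- sandwich for F at the points γ l
  have hsand : ∀ ε : ℝ, 0 < ε → ∀ᶠ l in atTop,
      (Δ - ε) * γ l ≤ F (γ l) ∧ F (γ l) ≤ (Δ + ε) * γ l := by
    intro ε hε
    obtain ⟨N, hN⟩ := Metric.tendsto_atTop.mp hdens ε hε
    have hbound : ∀ k, N ≤ k →
        (Δ - ε) * (γ k - γ (k+1)) ≤ a k ∧ a k ≤ (Δ + ε) * (γ k - γ (k+1)) := by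
      intro k hk
      have h1 := hN k hk
      rw [Real.dist_eq, abs_lt] at h1
      have hdk : 0 < γ k - γ (k+1) := sub_pos.mpr (hγlt k)
      constructor
      · have h2 : Δ - ε ≤ a k / (γ k - γ (k+1)) := by linarith [h1.1]
        calc (Δ - ε) * (γ k - γ (k+1)) ≤ (a k / (γ k - γ (k+1))) * (γ k - γ (k+1)) :=
              mul_le_mul_of_nonneg_right h2 hdk.le
          _ = a k := by field_simp
      · have h2 : a k / (γ k - γ (k+1)) ≤ Δ + ε := by linarith [h1.2]
        calc a k = (a k / (γ k - γ (k+1))) * (γ k - γ (k+1)) := by field_simp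
          _ ≤ (Δ + ε) * (γ k - γ (k+1)) := mul_le_mul_of_nonneg_right h2 hdk.le
    have key : ∀ l, N ≤ l → ∀ m, l ≤ m →
        F (γ m) + (Δ - ε) * (γ l - γ m) ≤ F (γ l) ∧
        F (γ l) ≤ F (γ m) + (Δ + ε) * (γ l - γ m) := by
      intro l hl m hm
      induction m, hm using Nat.le_induction with
      | base => constructor <;> simp
      | succ m hm ih =>
        obtain ⟨ih1, ih2⟩ := ih
        have hb := hbound m (le_trans hl hm)
        have hs := hstep m
        have e1 : (Δ - ε) * (γ l - γ (m+1))
            = (Δ - ε) * (γ l - γ m) + (Δ - ε) * (γ m - γ (m+1)) := by ring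
        have e2 : (Δ + ε) * (γ l - γ (m+1))
            = (Δ + ε) * (γ l - γ m) + (Δ + ε) * (γ m - γ (m+1)) := by ring
        constructor
        · linarith [hb.1]
        · linarith [hb.2]
    filter_upwards [eventually_ge_atTop N] with l hl
    have htend : Tendsto (fun m => F (γ m) + (Δ + ε) * (γ l - γ m)) atTop
        (nhds (0 + (Δ + ε) * (γ l - 0))) :=
      hFγ0.add ((tendsto_const_nhds.sub h0).const_mul _)
    have htend' : Tendsto (fun m => F (γ m) + (Δ - ε) * (γ l - γ m)) atTop
        (nhds (0 + (Δ - ε) * (γ l - 0))) :=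
      hFγ0.add ((tendsto_const_nhds.sub h0).const_mul _)
    constructor
    · have := le_of_tendsto htend'
        (eventually_atTop.mpr ⟨l, fun m hm => (key l hl m hm).1⟩)
      simpa using this
    · have := ge_of_tendsto htend
        (eventually_atTop.mpr ⟨l, fun m hm => (key l hl m hm).2⟩)
      simpa using this
  -- ratio tends to 1
  have hrat : Tendsto (fun l : ℕ => γ l / γ (l+1)) atTop (nhds 1) := by
    have h2 : Tendsto (fun l : ℕ => ((l:ℝ)+1)^2 * γ (l+1)) atTop (nhds c) := by
      have h := hlim.comp (tendsto_add_atTop_nat 1)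
      refine h.congr fun l => ?_
      simp only [Function.comp]
      push_cast
      ring
    have hq : Tendsto (fun l : ℕ => ((l:ℝ)^2 * γ l) / (((l:ℝ)+1)^2 * γ (l+1)))
        atTop (nhds (c / c)) := hlim.div h2 hc.ne'
    rw [div_self hc.ne'] at hq
    have hp : Tendsto (fun l : ℕ => (((l:ℝ)+1)/(l:ℝ))^2) atTop (nhds 1) := by
      have h1 : Tendsto (fun l : ℕ => ((l:ℝ)+1)/(l:ℝ)) atTop (nhds 1) := by
        have hz : Tendsto (fun n : ℕ => 1 / (n:ℝ)) atTop (nhds 0) := tendsto_one_div_atTop_nhds_zero_nat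
        have h' : Tendsto (fun l : ℕ => 1 + 1/(l:ℝ)) atTop (nhds (1 + 0)) :=
          tendsto_const_nhds.add hz
        rw [add_zero] at h'
        refine h'.congr' ?_
        filter_upwards [eventually_ge_atTop 1] with l hl
        have hl0 : (l:ℝ) ≠ 0 := Nat.cast_ne_zero.mpr (by omega)
        field_simp
      simpa using h1.pow 2
    have hmul := hq.mul hp
    rw [one_mul] at hmul
    refine hmul.congr' ?_
    filter_upwards [eventually_ge_atTop 1] with l hl
    have hl0 : (l:ℝ) ≠ 0 := Nat.cast_ne_zero.mpr (by omega)
    have hl1 : ((l:ℝ)+1) ≠ 0 := by positivity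
    have hg : γ (l+1) ≠ 0 := (hpos _).ne'
    field_simp
  -- Δ is between 0 and 1
  have hΔ0 : 0 ≤ Δ := ge_of_tendsto' hdens fun k =>
    div_nonneg ENNReal.toReal_nonneg (sub_nonneg.mpr (hγlt k).le)
  have hΔ1 : Δ ≤ 1 := by
    refine le_of_tendsto' hdens fun k => ?_
    have hdk : 0 < γ k - γ (k+1) := sub_pos.mpr (hγlt k)
    have hak : (volume (Ω ∩ Set.Icc (γ (k+1)) (γ k))).toReal ≤ γ k - γ (k+1) := by
      have h1 := ENNReal.toReal_mono (a := volume (Ω ∩ Set.Icc (γ (k+1)) (γ k)))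
        (b := volume (Set.Icc (γ (k+1)) (γ k)))
        (by rw [Real.volume_Icc]; exact ENNReal.ofReal_ne_top)
        (measure_mono inter_subset_right)
      simpa [Real.volume_Icc, ENNReal.toReal_ofReal hdk.le] using h1
    exact div_le_one_of_le₀ hak hdk.le
  -- main ε-δ argument
  rw [Metric.tendsto_nhdsWithin_nhds]
  intro ε0 hε0
  set ε := min 1 (ε0/4) with hεdef
  have hε : 0 < ε := lt_min one_pos (by linarith)
  have hε1 : ε ≤ 1 := min_le_left _ _
  obtain ⟨L1, hL1⟩ := eventually_atTop.mp (hsand ε hε)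
  obtain ⟨L2, hL2⟩ := eventually_atTop.mp
    (hrat.eventually (eventually_le_nhds (by linarith : (1:ℝ) < 1 + ε)))
  set L := max L1 L2 with hLdef
  have hL1L : L1 ≤ L := le_max_left _ _
  have hL2L : L2 ≤ L := le_max_right _ _
  refine ⟨γ (L+1), hpos _, ?_⟩
  intro t ht hdist
  rw [Real.dist_eq, sub_zero] at hdist
  have ht0 : 0 < t := ht
  have htL : t < γ (L+1) := lt_of_abs_lt hdist
  have hex : ∃ k, γ k ≤ t := (h0.eventually (eventually_le_nhds ht0)).exists
  have hnL : L + 2 ≤ Nat.find hex := by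
    by_contra h
    push_neg at h
    have h2 : γ (L+1) ≤ γ (Nat.find hex) := hanti.antitone (by omega)
    have h3 := Nat.find_spec hex
    linarith
  set l := Nat.find hex - 1 with hldef
  have hl1 : l + 1 = Nat.find hex := by omega
  have hγl1 : γ (l+1) ≤ t := by rw [hl1]; exact Nat.find_spec hex
  have htl : t < γ l := lt_of_not_ge (Nat.find_min hex (by omega))
  have hlL : L + 1 ≤ l := by omega
  obtain ⟨hlow, hup⟩ := hL1 l (by omega)
  obtain ⟨hlow', _⟩ := hL1 (l+1) (by omega)
  have hratl : γ l / γ (l+1) ≤ 1 + ε := hL2 l (by omega)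
  have hγl1t : γ l ≤ (1+ε) * γ (l+1) := by
    rw [div_le_iff₀ (hpos (l+1))] at hratl
    linarith
  have hFt_le : F t ≤ (Δ + 3*ε) * t := by
    have h1 : F t ≤ F (γ l) := hFmono _ _ htl.le
    have h3 : (Δ + ε) * γ l ≤ (Δ + ε) * ((1+ε) * γ (l+1)) :=
      mul_le_mul_of_nonneg_left hγl1t (by linarith)
    have h4 : (Δ + ε) * ((1+ε) * γ (l+1)) ≤ (Δ + 3*ε) * γ (l+1) := by
      have hg := hpos (l+1)
      nlinarith [hε.le, hε1, hΔ1, hΔ0]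
    have h5 : (Δ + 3*ε) * γ (l+1) ≤ (Δ + 3*ε) * t :=
      mul_le_mul_of_nonneg_left hγl1 (by linarith)
    linarith
  have hFt_ge : (Δ - 3*ε) * t ≤ F t := by
    rcases le_or_gt (Δ - 3*ε) 0 with h | h
    · exact le_trans (mul_nonpos_of_nonpos_of_nonneg h ht0.le) (hFnn t)
    · have h1 : F (γ (l+1)) ≤ F t := hFmono _ _ hγl1
      have h3 : (Δ - 3*ε) * γ l ≤ (Δ - ε) * γ (l+1) := by
        have hg := hpos (l+1)
        nlinarith [hγl1t, hΔ1, hε.le, hε1]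
      have h4 : (Δ - 3*ε) * t ≤ (Δ - 3*ε) * γ l :=
        mul_le_mul_of_nonneg_left htl.le h.le
      linarith
  rw [Real.dist_eq, abs_lt]
  have h3ε : 3*ε < ε0 := by
    have := min_le_right 1 (ε0/4)
    simp only [hεdef] at *
    linarith
  constructor
  · have := (le_div_iff₀ ht0).mpr hFt_ge
    linarith
  · have := (div_le_iff₀ ht0).mpr hFt_le
    linarith
end
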